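/- Let X and Y be Banach spaces. If (X* × Y, K) has property L_{o,o} for bilinear forms, then every nuclear operator from X into Y can be approximated in the nuclear norm by nuclear operators which attain their nuclear norm; that is, NA_N(X, Y) is ‖·‖_N-dense in N(X, Y). -/

import Mathlib

/-!
Hahn–Banach applied to the nuclear seminorm gives a functional norming `T`; evaluated on
elementary tensors it is a bilinear form `B` on `X* × Y` with `‖B‖ = 1` and
`∑ₙ B(fₙ, yₙ) = ‖T‖_N` for every nuclear representation `T = ∑ₙ fₙ ⊗ yₙ`. For a representation
with `∑ₙ ‖fₙ‖‖yₙ‖` close to `‖T‖_N` the total slack `∑ₙ (‖fₙ‖‖yₙ‖ - B(fₙ, yₙ))` is small, so the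
terms at which `B` is far from norming carry little mass. Property L_{o,o} moves every other term
to a nearby pair `(f₀ₙ, y₀ₙ)` with `B(f₀ₙ, y₀ₙ) = ‖f₀ₙ‖‖y₀ₙ‖`. Then `T' = ∑ₙ f₀ₙ ⊗ y₀ₙ` attains
its nuclear norm, since `B` certifies `‖T'‖_N ≥ ∑ₙ ‖f₀ₙ‖‖y₀ₙ‖`, and
`fₙ ⊗ yₙ - f₀ₙ ⊗ y₀ₙ = (fₙ - f₀ₙ) ⊗ yₙ + f₀ₙ ⊗ (yₙ - y₀ₙ)` gives `T - T'` a representation of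
small mass.
-/

noncomputable section

open scoped BigOperators

/-- `r` is the value `∑ₙ ‖x*ₙ‖‖yₙ‖` of a nuclear representation `T = ∑ₙ x*ₙ ⊗ yₙ`,
i.e. `T x = ∑ₙ x*ₙ(x) yₙ` with `∑ₙ ‖x*ₙ‖‖yₙ‖ < ∞`. -/
def IsNuclearRep {X Y : Type*} [NormedAddCommGroup X] [NormedSpace ℝ X]
    [NormedAddCommGroup Y] [NormedSpace ℝ Y]
    (T : X →L[ℝ] Y) (r : ℝ) : Prop :=
  ∃ (f : ℕ → (X →L[ℝ] ℝ)) (y : ℕ → Y),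
    Summable (fun n => ‖f n‖ * ‖y n‖) ∧
    (∀ x : X, HasSum (fun n => f n x • y n) (T x)) ∧
    r = ∑' n, ‖f n‖ * ‖y n‖

/-- `T` is a nuclear operator. -/
def IsNuclearOp {X Y : Type*} [NormedAddCommGroup X] [NormedSpace ℝ X]
    [NormedAddCommGroup Y] [NormedSpace ℝ Y] (T : X →L[ℝ] Y) : Prop :=
  ∃ r : ℝ, IsNuclearRep T r

/-- The nuclear norm `‖T‖_N = inf {∑ₙ ‖x*ₙ‖‖yₙ‖ : T = ∑ₙ x*ₙ ⊗ yₙ}`. -/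
def nuclearNorm {X Y : Type*} [NormedAddCommGroup X] [NormedSpace ℝ X]
    [NormedAddCommGroup Y] [NormedSpace ℝ Y] (T : X →L[ℝ] Y) : ℝ :=
  sInf {r : ℝ | IsNuclearRep T r}

/-- `T` attains its nuclear norm: some nuclear representation realizes `‖T‖_N`. -/
def AttainsNuclearNorm {X Y : Type*} [NormedAddCommGroup X] [NormedSpace ℝ X]
    [NormedAddCommGroup Y] [NormedSpace ℝ Y] (T : X →L[ℝ] Y) : Prop :=
  IsNuclearRep T (nuclearNorm T)

/-- `(X × Y, ℝ)` has property L_{o,o} for bilinear forms. -/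
def BilinLoo (X Y : Type*) [NormedAddCommGroup X] [NormedSpace ℝ X]
    [NormedAddCommGroup Y] [NormedSpace ℝ Y] : Prop :=
  ∀ B : X →L[ℝ] Y →L[ℝ] ℝ, ‖B‖ = 1 → ∀ ε : ℝ, 0 < ε → ∃ η : ℝ, 0 < η ∧
    ∀ (x : X) (y : Y), ‖x‖ = 1 → ‖y‖ = 1 → 1 - η < |B x y| →
      ∃ (x₀ : X) (y₀ : Y), ‖x₀‖ = 1 ∧ ‖y₀‖ = 1 ∧ |B x₀ y₀| = 1 ∧
        ‖x - x₀‖ < ε ∧ ‖y - y₀‖ < ε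

open Filter Topology

theorem Seminorm.exists_dual_apply_eq {E : Type*} [AddCommGroup E] [Module ℝ E]
    (p : Seminorm ℝ E) (x : E) : ∃ g : Module.Dual ℝ E, g x = p x ∧ ∀ z, |g z| ≤ p z := by
  by_cases hpx : p x = 0
  · exact ⟨0, by simp [hpx], fun z => by simp⟩
  have hx : x ≠ 0 := by rintro rfl; simp at hpx
  let f : E →ₗ.[ℝ] ℝ := LinearPMap.mkSpanSingleton x (p x) hx
  obtain ⟨g, hgf, hgp⟩ := Module.Dual.exists_extension_of_le_seminorm_real f.domain f.toFun
    (p := p) fun z => by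
      obtain ⟨c, hc⟩ := Submodule.mem_span_singleton.1 z.2
      have hz : z = ⟨c • x, hc ▸ z.2⟩ := Subtype.ext hc.symm
      rw [hz, map_smul_eq_mul, Real.norm_eq_abs]
      exact (LinearPMap.mkSpanSingleton'_apply x (p x) _ c _).trans_le
        (mul_le_mul_of_nonneg_right (le_abs_self c) (apply_nonneg p x))
  exact ⟨g, (hgf ⟨x, Submodule.mem_span_singleton_self x⟩).trans
    (LinearPMap.mkSpanSingleton_apply ℝ ℝ hx _), hgp⟩

section NuclearNorm

variable {X Y : Type*} [NormedAddCommGroup X] [NormedSpace ℝ X]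
  [NormedAddCommGroup Y] [NormedSpace ℝ Y]

lemma IsNuclearRep.nonneg {T : X →L[ℝ] Y} {r : ℝ} (h : IsNuclearRep T r) : 0 ≤ r := by
  obtain ⟨f, y, -, -, rfl⟩ := h
  exact tsum_nonneg fun n => by positivity

lemma bddBelow_isNuclearRep (T : X →L[ℝ] Y) : BddBelow {r | IsNuclearRep T r} :=
  ⟨0, fun _ hr => hr.nonneg⟩

lemma nuclearNorm_le {T : X →L[ℝ] Y} {r : ℝ} (h : IsNuclearRep T r) : nuclearNorm T ≤ r :=
  csInf_le (bddBelow_isNuclearRep T) h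

lemma nuclearNorm_nonneg (T : X →L[ℝ] Y) : 0 ≤ nuclearNorm T :=
  Real.sInf_nonneg fun _ hr => hr.nonneg

lemma IsNuclearOp.exists_isNuclearRep_lt {T : X →L[ℝ] Y} (hT : IsNuclearOp T) {δ : ℝ}
    (hδ : 0 < δ) : ∃ r, IsNuclearRep T r ∧ r < nuclearNorm T + δ :=
  Real.lt_sInf_add_pos hT hδ

lemma isNuclearRep_zero : IsNuclearRep (0 : X →L[ℝ] Y) 0 :=
  ⟨0, 0, by simp, fun _ => by simp, by simp⟩

lemma nuclearNorm_zero : nuclearNorm (0 : X →L[ℝ] Y) = 0 :=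
  (nuclearNorm_le isNuclearRep_zero).antisymm (nuclearNorm_nonneg 0)

lemma attainsNuclearNorm_zero : AttainsNuclearNorm (0 : X →L[ℝ] Y) := by
  rw [AttainsNuclearNorm, nuclearNorm_zero]
  exact isNuclearRep_zero

lemma isNuclearRep_smulRight (f : X →L[ℝ] ℝ) (y : Y) :
    IsNuclearRep (f.smulRight y) (‖f‖ * ‖y‖) := by
  let f' : ℕ → X →L[ℝ] ℝ := Pi.single 0 f
  let y' : ℕ → Y := Pi.single 0 y
  have hnorm : HasSum (fun n => ‖f' n‖ * ‖y' n‖) (‖f‖ * ‖y‖) := by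
    simpa [f', y'] using hasSum_single (f := fun n => ‖f' n‖ * ‖y' n‖) 0
      fun n hn => by simp [f', y', hn]
  refine ⟨f', y', hnorm.summable, fun x => ?_, hnorm.tsum_eq.symm⟩
  simpa [f', y'] using hasSum_single (f := fun n => f' n x • y' n) 0
    fun n hn => by simp [f', y', hn]

lemma IsNuclearRep.smul {T : X →L[ℝ] Y} {r : ℝ} (h : IsNuclearRep T r) (c : ℝ) :
    IsNuclearRep (c • T) (|c| * r) := by
  obtain ⟨f, y, hs, hT, rfl⟩ := h
  have hnorm : (fun n => ‖c • f n‖ * ‖y n‖) = fun n => |c| * (‖f n‖ * ‖y n‖) := by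
    ext n; rw [norm_smul, Real.norm_eq_abs, mul_assoc]
  refine ⟨fun n => c • f n, y, hnorm ▸ hs.mul_left _, fun x => ?_, by rw [hnorm, tsum_mul_left]⟩
  simpa [smul_smul] using (hT x).const_smul c

lemma IsNuclearRep.add {S T : X →L[ℝ] Y} {r s : ℝ} (hS : IsNuclearRep S r)
    (hT : IsNuclearRep T s) : IsNuclearRep (S + T) (r + s) := by
  obtain ⟨f, y, hf, hSx, rfl⟩ := hS
  obtain ⟨g, z, hg, hTx, rfl⟩ := hT
  have hnorm : HasSum (fun i => ‖Sum.elim f g i‖ * ‖Sum.elim y z i‖)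
      ((∑' n, ‖f n‖ * ‖y n‖) + ∑' n, ‖g n‖ * ‖z n‖) := hf.hasSum.sum hg.hasSum
  have hx (x : X) : HasSum (fun i => Sum.elim f g i x • Sum.elim y z i) (S x + T x) := by
    apply HasSum.sum
    exacts [hSx x, hTx x]
  -- an opaque bijection: elaborating against `natSumNatEquivNat` itself unfolds it and times out
  obtain ⟨e⟩ : Nonempty (ℕ ≃ ℕ ⊕ ℕ) := ⟨Equiv.natSumNatEquivNat.symm⟩
  exact ⟨Sum.elim f g ∘ e, Sum.elim y z ∘ e, e.summable_iff.2 hnorm.summable,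
    fun x => (e.hasSum_iff.2 (hx x) :), ((e.tsum_eq _).trans hnorm.tsum_eq).symm⟩

lemma nuclearNorm_add_le {S T : X →L[ℝ] Y} (hS : IsNuclearOp S) (hT : IsNuclearOp T) :
    nuclearNorm (S + T) ≤ nuclearNorm S + nuclearNorm T := by
  refine le_of_forall_pos_lt_add fun δ hδ => ?_
  obtain ⟨r, hr, hrlt⟩ := hS.exists_isNuclearRep_lt (half_pos hδ)
  obtain ⟨s, hs, hslt⟩ := hT.exists_isNuclearRep_lt (half_pos hδ)
  linarith [nuclearNorm_le (hr.add hs)]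

lemma nuclearNorm_smul_le (c : ℝ) {T : X →L[ℝ] Y} (hT : IsNuclearOp T) :
    nuclearNorm (c • T) ≤ |c| * nuclearNorm T := by
  change sInf {r | IsNuclearRep (c • T) r} ≤ |c| • sInf {r | IsNuclearRep T r}
  rw [← Real.sInf_smul_of_nonneg (abs_nonneg c)]
  refine csInf_le_csInf (bddBelow_isNuclearRep _) (Set.Nonempty.image _ hT) ?_
  rintro _ ⟨r, hr, rfl⟩
  exact hr.smul c

end NuclearNorm

section BilinearForm

variable {E F : Type*} [NormedAddCommGroup E] [NormedSpace ℝ E]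
  [NormedAddCommGroup F] [NormedSpace ℝ F]

lemma abs_apply₂_sub_apply₂_le (B : E →L[ℝ] F →L[ℝ] ℝ) (x x₀ : E) (y y₀ : F) :
    |B x y - B x₀ y₀| ≤ ‖B‖ * (‖x - x₀‖ * ‖y‖ + ‖x₀‖ * ‖y - y₀‖) := by
  have h : B x y - B x₀ y₀ = B (x - x₀) y + B x₀ (y - y₀) := by simp [map_sub]
  rw [h, mul_add, ← mul_assoc, ← mul_assoc]
  exact (abs_add_le _ _).trans (add_le_add (B.le_opNorm₂ _ _) (B.le_opNorm₂ _ _))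

lemma norm_sub_norm_smul {G : Type*} [NormedAddCommGroup G] [NormedSpace ℝ G] {x : G}
    (hx : x ≠ 0) (u : G) : ‖x - ‖x‖ • u‖ = ‖x‖ * ‖‖x‖⁻¹ • x - u‖ := by
  calc ‖x - ‖x‖ • u‖ = ‖‖x‖ • (‖x‖⁻¹ • x - u)‖ := by
        rw [smul_sub, smul_inv_smul₀ (norm_ne_zero_iff.2 hx)]
    _ = ‖x‖ * ‖‖x‖⁻¹ • x - u‖ := by rw [norm_smul, norm_norm]

lemma apply₂_le (B : E →L[ℝ] F →L[ℝ] ℝ) (x : E) (y : F) : B x y ≤ ‖B‖ * (‖x‖ * ‖y‖) :=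
  (le_abs_self _).trans ((B.le_opNorm₂ x y).trans_eq (mul_assoc ..))

lemma summable_apply₂ (B : E →L[ℝ] F →L[ℝ] ℝ) {x : ℕ → E} {y : ℕ → F}
    (h : Summable fun n => ‖x n‖ * ‖y n‖) : Summable fun n => B (x n) (y n) :=
  Summable.of_norm_bounded (h.mul_left ‖B‖) fun _ => (B.le_opNorm₂ _ _).trans_eq (mul_assoc ..)

lemma tsum_apply₂_le (B : E →L[ℝ] F →L[ℝ] ℝ) {x : ℕ → E} {y : ℕ → F}
    (h : Summable fun n => ‖x n‖ * ‖y n‖) :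
    ∑' n, B (x n) (y n) ≤ ‖B‖ * ∑' n, ‖x n‖ * ‖y n‖ := by
  rw [← tsum_mul_left]
  exact (summable_apply₂ B h).tsum_le_tsum (fun n => apply₂_le B _ _) (h.mul_left ‖B‖)

lemma BilinLoo.exists_apply_eq_one (hL : BilinLoo E F) {B : E →L[ℝ] F →L[ℝ] ℝ} (hB : ‖B‖ = 1)
    {ε : ℝ} (hε : 0 < ε) : ∃ η > 0, ∀ (x : E) (y : F), ‖x‖ = 1 → ‖y‖ = 1 → 1 - η < B x y →
      ∃ (x₀ : E) (y₀ : F), ‖x₀‖ = 1 ∧ ‖y₀‖ = 1 ∧ B x₀ y₀ = 1 ∧ ‖x - x₀‖ < ε ∧ ‖y - y₀‖ < ε := by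
  obtain ⟨η, hη, hL⟩ := hL B hB (min ε (1 / 4)) (by positivity)
  refine ⟨min η (1 / 2), by positivity, fun x y hx hy hxy => ?_⟩
  have hxy' : 1 - η < |B x y| := by
    linarith [min_le_left η (1 / 2), le_abs_self (B x y)]
  obtain ⟨x₀, y₀, hx₀, hy₀, hB₀, hdx, hdy⟩ := hL x y hx hy hxy'
  have hclose := abs_apply₂_sub_apply₂_le B x x₀ y y₀
  rw [hB, hy, hx₀, one_mul, one_mul, mul_one] at hclose
  -- `B x₀ y₀ = ±1` lies within `1/2` of `B x y > 1/2`
  have hpos : 0 < B x₀ y₀ := by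
    linarith [(abs_le.1 hclose).2, min_le_right ε (1 / 4), min_le_right η (1 / 2)]
  refine ⟨x₀, y₀, hx₀, hy₀, (abs_of_pos hpos).symm.trans hB₀,
    hdx.trans_le (min_le_left _ _), hdy.trans_le (min_le_left _ _)⟩

lemma BilinLoo.exists_apply_eq_norm_mul_norm (hL : BilinLoo E F) {B : E →L[ℝ] F →L[ℝ] ℝ}
    (hB : ‖B‖ = 1) {ε : ℝ} (hε : 0 < ε) :
    ∃ η > 0, ∀ (x : E) (y : F), (1 - η) * (‖x‖ * ‖y‖) < B x y →
      ∃ (x₀ : E) (y₀ : F), ‖x₀‖ = ‖x‖ ∧ ‖y₀‖ = ‖y‖ ∧ B x₀ y₀ = ‖x₀‖ * ‖y₀‖ ∧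
        ‖x - x₀‖ ≤ ε * ‖x‖ ∧ ‖y - y₀‖ ≤ ε * ‖y‖ := by
  obtain ⟨η, hη, hL⟩ := hL.exists_apply_eq_one hB hε
  refine ⟨η, hη, fun x y hxy => ?_⟩
  have hx : x ≠ 0 := by rintro rfl; simp at hxy
  have hy : y ≠ 0 := by rintro rfl; simp at hxy
  have hxy' : 1 - η < B (‖x‖⁻¹ • x) (‖y‖⁻¹ • y) := by
    have h : B (‖x‖⁻¹ • x) (‖y‖⁻¹ • y) = B x y / (‖x‖ * ‖y‖) := by
      simp only [map_smul, FunLike.coe_smul, Pi.smul_apply, smul_eq_mul]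
      field_simp
    rwa [h, lt_div_iff₀ (by positivity)]
  obtain ⟨u, v, hu, hv, huv, hdu, hdv⟩ :=
    hL _ _ (norm_smul_inv_norm hx) (norm_smul_inv_norm hy) hxy'
  refine ⟨‖x‖ • u, ‖y‖ • v, by simp [norm_smul, hu], by simp [norm_smul, hv], ?_, ?_, ?_⟩
  · simp [norm_smul, hu, hv, huv, mul_comm]
  · rw [norm_sub_norm_smul hx, mul_comm]
    exact mul_le_mul_of_nonneg_right hdu.le (norm_nonneg x)
  · rw [norm_sub_norm_smul hy, mul_comm]
    exact mul_le_mul_of_nonneg_right hdv.le (norm_nonneg y)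

lemma BilinLoo.exists_approx_apply_eq_norm_mul_norm (hL : BilinLoo E F)
    {B : E →L[ℝ] F →L[ℝ] ℝ} (hB : ‖B‖ = 1) {ε : ℝ} (hε : 0 < ε) :
    ∃ η > 0, ∀ (x : E) (y : F), ∃ (x₀ : E) (y₀ : F), ‖x₀‖ * ‖y₀‖ ≤ ‖x‖ * ‖y‖ ∧
      B x₀ y₀ = ‖x₀‖ * ‖y₀‖ ∧
      ‖x - x₀‖ * ‖y‖ ≤ ε * (‖x‖ * ‖y‖) +
        (if B x y ≤ (1 - η) * (‖x‖ * ‖y‖) then ‖x‖ * ‖y‖ else 0) ∧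
      ‖x₀‖ * ‖y - y₀‖ ≤ ε * (‖x‖ * ‖y‖) := by
  obtain ⟨η, hη, hL⟩ := hL.exists_apply_eq_norm_mul_norm hB hε
  refine ⟨η, hη, fun x y => ?_⟩
  split_ifs with hxy
  · exact ⟨0, 0, by simp; positivity, by simp, by simp; positivity, by simp; positivity⟩
  obtain ⟨x₀, y₀, hx₀, hy₀, hB₀, hdx, hdy⟩ := hL x y (not_le.1 hxy)
  refine ⟨x₀, y₀, by rw [hx₀, hy₀], hB₀, ?_, ?_⟩
  · rw [add_zero, ← mul_assoc]
    exact mul_le_mul_of_nonneg_right hdx (norm_nonneg y)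
  · rw [hx₀, mul_left_comm]
    exact mul_le_mul_of_nonneg_left hdy (norm_nonneg x)

end BilinearForm

lemma HasSum.indicator_compl_finset {α β : Type*} [AddCommGroup α] [TopologicalSpace α]
    [IsTopologicalAddGroup α] {g : β → α} {a : α} (h : HasSum g a) (s : Finset β) :
    HasSum ((s : Set β)ᶜ.indicator g) (a - ∑ n ∈ s, g n) :=
  hasSum_subtype_iff_indicator.1 ((s.hasSum_iff_compl).1 h)

lemma mul_tsum_ite_le_tsum_sub_tsum {a b : ℕ → ℝ} {η : ℝ} (hab : ∀ n, b n ≤ a n)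
    (ha : Summable a) (hb : Summable b) :
    η * ∑' n, (if b n ≤ (1 - η) * a n then a n else 0) ≤ ∑' n, a n - ∑' n, b n := by
  have hs : Summable fun n => if b n ≤ (1 - η) * a n then a n else 0 :=
    (ha.indicator {n | b n ≤ (1 - η) * a n}).congr fun n => by simp [Set.indicator_apply]
  rw [← tsum_mul_left, ← ha.tsum_sub hb]
  refine (hs.mul_left η).tsum_le_tsum (fun n => ?_) (ha.sub hb)
  split_ifs with hn <;> linarith [hab n]

section NuclearExpansion

variable {X Y : Type*} [NormedAddCommGroup X] [NormedSpace ℝ X]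
  [NormedAddCommGroup Y] [NormedSpace ℝ Y]

def IsNuclearExpansion (T : X →L[ℝ] Y) (f : ℕ → X →L[ℝ] ℝ) (y : ℕ → Y) : Prop :=
  Summable (fun n => ‖f n‖ * ‖y n‖) ∧ ∀ x, HasSum (fun n => f n x • y n) (T x)

lemma IsNuclearExpansion.isNuclearRep {T : X →L[ℝ] Y} {f : ℕ → X →L[ℝ] ℝ} {y : ℕ → Y}
    (h : IsNuclearExpansion T f y) : IsNuclearRep T (∑' n, ‖f n‖ * ‖y n‖) :=
  ⟨f, y, h.1, h.2, rfl⟩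

lemma IsNuclearExpansion.isNuclearRep_sub_sum {T : X →L[ℝ] Y} {f : ℕ → X →L[ℝ] ℝ} {y : ℕ → Y}
    (h : IsNuclearExpansion T f y) (s : Finset ℕ) :
    IsNuclearRep (T - ∑ n ∈ s, (f n).smulRight (y n))
      (∑' n, ‖f n‖ * ‖y n‖ - ∑ n ∈ s, ‖f n‖ * ‖y n‖) := by
  have hnorm : (fun n => ‖(s : Set ℕ)ᶜ.indicator f n‖ * ‖y n‖) =
      (s : Set ℕ)ᶜ.indicator fun n => ‖f n‖ * ‖y n‖ := by
    funext n; by_cases hn : n ∈ s <;> simp [hn]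
  have hterm (x : X) : (fun n => (s : Set ℕ)ᶜ.indicator f n x • y n) =
      (s : Set ℕ)ᶜ.indicator fun n => f n x • y n := by
    funext n; by_cases hn : n ∈ s <;> simp [hn]
  have hsum := h.1.hasSum.indicator_compl_finset s
  refine ⟨(s : Set ℕ)ᶜ.indicator f, y, hnorm ▸ hsum.summable, fun x => ?_,
    by rw [hnorm, hsum.tsum_eq]⟩
  rw [hterm]
  simpa using (h.2 x).indicator_compl_finset s

end NuclearExpansion

section NormingForm

variable {X Y : Type*} [NormedAddCommGroup X] [NormedSpace ℝ X]
  [NormedAddCommGroup Y] [NormedSpace ℝ Y]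

variable (X Y) in
def nuclearOps : Submodule ℝ (X →L[ℝ] Y) where
  carrier := {T | IsNuclearOp T}
  zero_mem' := ⟨0, isNuclearRep_zero⟩
  add_mem' := fun ⟨r, hr⟩ ⟨s, hs⟩ => ⟨r + s, hr.add hs⟩
  smul_mem' := fun c _ ⟨r, hr⟩ => ⟨|c| * r, hr.smul c⟩

variable (X Y) in
def nuclearSeminorm : Seminorm ℝ (nuclearOps X Y) :=
  Seminorm.ofSMulLE (fun S => nuclearNorm (S : X →L[ℝ] Y)) nuclearNorm_zero
    (fun S T => nuclearNorm_add_le S.2 T.2) (fun c S => nuclearNorm_smul_le c S.2)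

lemma nuclearSeminorm_apply (S : nuclearOps X Y) :
    nuclearSeminorm X Y S = nuclearNorm (S : X →L[ℝ] Y) :=
  rfl

def nuclearSmulRight : (X →L[ℝ] ℝ) →ₗ[ℝ] Y →ₗ[ℝ] nuclearOps X Y :=
  LinearMap.mk₂ ℝ (fun f y => ⟨f.smulRight y, _, isNuclearRep_smulRight f y⟩)
    (fun _ _ _ => Subtype.ext <| by ext; simp [add_smul])
    (fun _ _ _ => Subtype.ext <| by ext; simp [smul_smul])
    (fun _ _ _ => Subtype.ext <| by ext; simp)
    (fun c f y => Subtype.ext <| ContinuousLinearMap.ext fun x => by simp [smul_comm (f x) c])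

@[simp]
lemma coe_nuclearSmulRight (f : X →L[ℝ] ℝ) (y : Y) :
    (nuclearSmulRight f y : X →L[ℝ] Y) = f.smulRight y :=
  rfl

lemma hasSum_dual_nuclearSmulRight (g : Module.Dual ℝ (nuclearOps X Y))
    (hg : ∀ S, |g S| ≤ nuclearSeminorm X Y S) {T : X →L[ℝ] Y} {f : ℕ → X →L[ℝ] ℝ} {y : ℕ → Y}
    (h : IsNuclearExpansion T f y) :
    HasSum (fun n => g (nuclearSmulRight (f n) (y n))) (g ⟨T, _, h.isNuclearRep⟩) := by
  have htail : Tendsto (fun s : Finset ℕ => ∑' n, ‖f n‖ * ‖y n‖ - ∑ n ∈ s, ‖f n‖ * ‖y n‖)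
      atTop (𝓝 0) := by
    have h0 := (tendsto_const_nhds (x := ∑' n, ‖f n‖ * ‖y n‖)).sub h.1.hasSum
    rwa [sub_self] at h0
  refine tendsto_iff_dist_tendsto_zero.2 (squeeze_zero (fun _ => dist_nonneg) (fun s => ?_) htail)
  rw [Real.dist_eq, ← map_sum, ← map_sub]
  refine (hg _).trans ?_
  rw [map_sub_rev]
  refine nuclearNorm_le ?_
  convert h.isNuclearRep_sub_sum s
  simp

theorem IsNuclearOp.exists_norming_bilinForm {T : X →L[ℝ] Y} (hT : IsNuclearOp T) :
    ∃ B : (X →L[ℝ] ℝ) →L[ℝ] Y →L[ℝ] ℝ, ‖B‖ ≤ 1 ∧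
      (∀ {S f y}, IsNuclearExpansion S f y → ∑' n, B (f n) (y n) ≤ nuclearNorm S) ∧
      ∀ {f y}, IsNuclearExpansion T f y → ∑' n, B (f n) (y n) = nuclearNorm T := by
  obtain ⟨g, hgT, hg⟩ := (nuclearSeminorm X Y).exists_dual_apply_eq ⟨T, hT⟩
  have hbound (f : X →L[ℝ] ℝ) (y : Y) : ‖g (nuclearSmulRight f y)‖ ≤ 1 * ‖f‖ * ‖y‖ :=
    (hg _).trans <| by
      simpa [nuclearSeminorm_apply] using nuclearNorm_le (isNuclearRep_smulRight f y)
  refine ⟨(nuclearSmulRight.compr₂ g).mkContinuous₂ 1 hbound,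
    LinearMap.mkContinuous₂_norm_le _ zero_le_one _, fun h => ?_, fun h => ?_⟩
  · exact (hasSum_dual_nuclearSmulRight g hg h).tsum_eq.trans_le ((le_abs_self _).trans (hg _))
  · exact (hasSum_dual_nuclearSmulRight g hg h).tsum_eq.trans hgT

end NormingForm

section Approximation

variable {X Y : Type*} [NormedAddCommGroup X] [NormedSpace ℝ X]
  [NormedAddCommGroup Y] [NormedSpace ℝ Y]

lemma IsNuclearExpansion.attainsNuclearNorm {B : (X →L[ℝ] ℝ) →L[ℝ] Y →L[ℝ] ℝ}
    (hB : ∀ {S f y}, IsNuclearExpansion S f y → ∑' n, B (f n) (y n) ≤ nuclearNorm S)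
    {T : X →L[ℝ] Y} {f : ℕ → X →L[ℝ] ℝ} {y : ℕ → Y} (h : IsNuclearExpansion T f y)
    (hfy : ∀ n, B (f n) (y n) = ‖f n‖ * ‖y n‖) : AttainsNuclearNorm T := by
  have hge : ∑' n, ‖f n‖ * ‖y n‖ ≤ nuclearNorm T := by simpa only [hfy] using hB h
  rw [AttainsNuclearNorm, (nuclearNorm_le h.isNuclearRep).antisymm hge]
  exact h.isNuclearRep

lemma norm_eq_one_of_tsum_eq_nuclearNorm {B : (X →L[ℝ] ℝ) →L[ℝ] Y →L[ℝ] ℝ} (hB : ‖B‖ ≤ 1)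
    {T : X →L[ℝ] Y} (hT : IsNuclearOp T) (hT0 : 0 < nuclearNorm T)
    (hBT : ∀ {f y}, IsNuclearExpansion T f y → ∑' n, B (f n) (y n) = nuclearNorm T) :
    ‖B‖ = 1 := by
  refine hB.antisymm (le_of_mul_le_mul_right ?_ hT0)
  rw [one_mul]
  refine le_of_forall_pos_le_add fun δ hδ => ?_
  obtain ⟨_, ⟨f, y, hs, hx, rfl⟩, hlt⟩ := hT.exists_isNuclearRep_lt hδ
  calc nuclearNorm T = ∑' n, B (f n) (y n) := (hBT ⟨hs, hx⟩).symm
    _ ≤ ‖B‖ * ∑' n, ‖f n‖ * ‖y n‖ := tsum_apply₂_le B hs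
    _ ≤ ‖B‖ * (nuclearNorm T + δ) := by gcongr
    _ ≤ ‖B‖ * nuclearNorm T + δ := by nlinarith [norm_nonneg B]

variable [CompleteSpace Y]

def nuclearSum (f : ℕ → X →L[ℝ] ℝ) (y : ℕ → Y) : X →L[ℝ] Y :=
  ∑' n, (f n).smulRight (y n)

lemma isNuclearExpansion_nuclearSum {f : ℕ → X →L[ℝ] ℝ} {y : ℕ → Y}
    (h : Summable fun n => ‖f n‖ * ‖y n‖) : IsNuclearExpansion (nuclearSum f y) f y := by
  have hs : Summable fun n => (f n).smulRight (y n) :=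
    Summable.of_norm (by simpa only [ContinuousLinearMap.norm_smulRight_apply] using h)
  exact ⟨h, fun x => by simpa using! hs.hasSum.mapL (ContinuousLinearMap.apply ℝ Y x)⟩

lemma IsNuclearExpansion.isNuclearRep_sub {T T' : X →L[ℝ] Y} {f f₀ : ℕ → X →L[ℝ] ℝ}
    {y y₀ : ℕ → Y} (h : IsNuclearExpansion T f y) (h₀ : IsNuclearExpansion T' f₀ y₀)
    (h₁ : Summable fun n => ‖f n - f₀ n‖ * ‖y n‖) (h₂ : Summable fun n => ‖f₀ n‖ * ‖y n - y₀ n‖) :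
    IsNuclearRep (T - T') (∑' n, ‖f n - f₀ n‖ * ‖y n‖ + ∑' n, ‖f₀ n‖ * ‖y n - y₀ n‖) := by
  have e₁ := isNuclearExpansion_nuclearSum h₁
  have e₂ := isNuclearExpansion_nuclearSum h₂
  have hsplit : T - T' =
      nuclearSum (fun n => f n - f₀ n) y + nuclearSum f₀ (fun n => y n - y₀ n) := by
    ext x
    refine ((h.2 x).sub (h₀.2 x)).unique ?_
    rw [add_apply]
    convert (e₁.2 x).add (e₂.2 x) using 1
    funext n
    simp only [sub_apply, sub_smul, smul_sub]
    abel
  rw [hsplit]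
  exact e₁.isNuclearRep.add e₂.isNuclearRep

end Approximation

theorem exists_attainsNuclearNorm_isNuclearRep_sub_lt {X Y : Type*} [NormedAddCommGroup X]
    [NormedSpace ℝ X] [NormedAddCommGroup Y] [NormedSpace ℝ Y] [CompleteSpace Y]
    (hL : BilinLoo (X →L[ℝ] ℝ) Y) {B : (X →L[ℝ] ℝ) →L[ℝ] Y →L[ℝ] ℝ} (hB : ‖B‖ = 1)
    (hBS : ∀ {S f y}, IsNuclearExpansion S f y → ∑' n, B (f n) (y n) ≤ nuclearNorm S)
    {T : X →L[ℝ] Y} (hT : IsNuclearOp T)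
    (hBT : ∀ {f y}, IsNuclearExpansion T f y → ∑' n, B (f n) (y n) = nuclearNorm T)
    {ε : ℝ} (hε : 0 < ε) :
    ∃ T' : X →L[ℝ] Y, AttainsNuclearNorm T' ∧ ∃ r, IsNuclearRep (T - T') r ∧ r < ε := by
  have hN := nuclearNorm_nonneg T
  -- chosen so that each of the error terms `ε' Λ`, `ε' Λ` and `∑ₙ bad n` below is `≤ ε / 4`
  set ε' := ε / (4 * (nuclearNorm T + 1))
  obtain ⟨η, hη, hterm⟩ := hL.exists_approx_apply_eq_norm_mul_norm hB (ε := ε') (by positivity)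
  obtain ⟨_, ⟨f, y, hs, hx, rfl⟩, hΛ⟩ :=
    hT.exists_isNuclearRep_lt (δ := min 1 (η * ε / 4)) (by positivity)
  have hfy : IsNuclearExpansion T f y := ⟨hs, hx⟩
  choose f₀ y₀ hnorm₀ hB₀ hdf hdy using fun n => hterm (f n) (y n)
  set Λ := ∑' n, ‖f n‖ * ‖y n‖
  set bad := fun n => if B (f n) (y n) ≤ (1 - η) * (‖f n‖ * ‖y n‖) then ‖f n‖ * ‖y n‖ else 0
  have hBfy (n : ℕ) : B (f n) (y n) ≤ ‖f n‖ * ‖y n‖ := by simpa [hB] using apply₂_le B (f n) (y n)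
  have hbad : η * ∑' n, bad n ≤ Λ - nuclearNorm T := by
    simpa only [hBT hfy] using mul_tsum_ite_le_tsum_sub_tsum hBfy hs (summable_apply₂ B hs)
  have hbad_sum : Summable bad :=
    hs.of_nonneg_of_le (fun n => by dsimp only [bad]; split_ifs <;> positivity)
      (fun n => by dsimp only [bad]; split_ifs <;> [rfl; positivity])
  have hs₀ : Summable fun n => ‖f₀ n‖ * ‖y₀ n‖ :=
    hs.of_nonneg_of_le (fun n => by positivity) hnorm₀
  have hs₁ : Summable fun n => ε' * (‖f n‖ * ‖y n‖) + bad n := (hs.mul_left ε').add hbad_sum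
  have hsf := hs₁.of_nonneg_of_le (fun n => by positivity) hdf
  have hsy := (hs.mul_left ε').of_nonneg_of_le (fun n => by positivity) hdy
  refine ⟨nuclearSum f₀ y₀, (isNuclearExpansion_nuclearSum hs₀).attainsNuclearNorm hBS hB₀, _,
    hfy.isNuclearRep_sub (isNuclearExpansion_nuclearSum hs₀) hsf hsy, ?_⟩
  have hεΛ : ε' * Λ ≤ ε / 4 := by
    calc ε' * Λ ≤ ε' * (nuclearNorm T + 1) := by gcongr; linarith [min_le_left 1 (η * ε / 4)]
      _ = ε / 4 := by simp only [ε']; field_simp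
  have hbad' : ∑' n, bad n < ε / 4 := by
    refine lt_of_mul_lt_mul_left ?_ hη.le
    linarith [min_le_right 1 (η * ε / 4)]
  calc _ ≤ (ε' * Λ + ∑' n, bad n) + ε' * Λ := by
        gcongr
        · exact (hsf.tsum_le_tsum hdf hs₁).trans_eq
            (by rw [(hs.mul_left ε').tsum_add hbad_sum, tsum_mul_left])
        · exact (hsy.tsum_le_tsum hdy (hs.mul_left ε')).trans_eq tsum_mul_left
    _ < ε := by linarith

theorem nuclear_normAttaining_dense_of_bilinLoo_general
    {X Y : Type*} [NormedAddCommGroup X] [NormedSpace ℝ X]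
    [NormedAddCommGroup Y] [NormedSpace ℝ Y] [CompleteSpace Y]
    (hL : BilinLoo (X →L[ℝ] ℝ) Y) :
    ∀ T : X →L[ℝ] Y, IsNuclearOp T → ∀ ε : ℝ, 0 < ε →
      ∃ T' : X →L[ℝ] Y, AttainsNuclearNorm T' ∧
        ∃ r : ℝ, IsNuclearRep (T - T') r ∧ r < ε := by
  intro T hT ε hε
  rcases (nuclearNorm_nonneg T).eq_or_lt with hT0 | hT0
  · obtain ⟨r, hr, hrε⟩ := hT.exists_isNuclearRep_lt hε
    exact ⟨0, attainsNuclearNorm_zero, r, by rwa [sub_zero], by linarith⟩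
  obtain ⟨B, hB1, hBS, hBT⟩ := hT.exists_norming_bilinForm
  exact exists_attainsNuclearNorm_isNuclearRep_sub_lt hL
    (norm_eq_one_of_tsum_eq_nuclearNorm hB1 hT hT0 hBT) hBS hT hBT hε

/-- If `(X* × Y, ℝ)` has property L_{o,o} for bilinear forms then every
nuclear operator from `X` to `Y` can be approximated in the nuclear norm by nuclear
operators which attain their nuclear norm. -/
theorem nuclear_normAttaining_dense_of_bilinLoo
    {X Y : Type*} [NormedAddCommGroup X] [NormedSpace ℝ X] [CompleteSpace X]
    [NormedAddCommGroup Y] [NormedSpace ℝ Y] [CompleteSpace Y]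
    (hL : BilinLoo (X →L[ℝ] ℝ) Y) :
    ∀ T : X →L[ℝ] Y, IsNuclearOp T → ∀ ε : ℝ, 0 < ε →
      ∃ T' : X →L[ℝ] Y, AttainsNuclearNorm T' ∧
        ∃ r : ℝ, IsNuclearRep (T - T') r ∧ r < ε :=
  nuclear_normAttaining_dense_of_bilinLoo_general hL
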